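/- arXiv:1708.04639 — 2 statements merged into one kernel-verified Lean document; each statement's English description precedes it below -/
import Mathlib

section
/- Given r ∈ [1, ∞), n ∈ ℤ, and a continuous function 𝔞 : [2^n, 2^{n+1}] → ℂ, one has V_r(𝔞_t : t ∈ [2^n, 2^{n+1})) ≤ 2^{1−1/r} Σ_{l≥0} ( Σ_{k=0}^{2^l − 1} |𝔞_{2^n + 2^{n−l}(k+1)} − 𝔞_{2^n + 2^{n−l}k}|^r )^{1/r}. -/
open MeasureTheory ENNReal Set
open scoped Pointwise NNReal

noncomputable section

/-- The `r`-variation seminorm of `t ↦ a t` over the index set `Z`: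
the supremum over all finite increasing sequences `t_0 < … < t_J` in `Z` of
`(∑_{j<J} ‖a t_{j+1} - a t_j‖^r)^{1/r}`. -/
def Vr {E : Type*} [SeminormedAddGroup E] (r : ℝ) (a : ℝ → E) (Z : Set ℝ) : ℝ≥0∞ :=
  ⨆ (J : ℕ) (t : Fin (J + 1) → ℝ) (_ : StrictMono t) (_ : ∀ j, t j ∈ Z),
    (∑ j : Fin J, ((‖a (t j.succ) - a (t j.castSucc)‖₊ : ℝ≥0∞)) ^ r) ^ (1 / r)

/-- The `L^p` norm of an `ℝ≥0∞`-valued function. -/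
def lpNormENN {α : Type*} [MeasurableSpace α] (p : ℝ) (g : α → ℝ≥0∞) (μ : Measure α) : ℝ≥0∞ :=
  (∫⁻ x, g x ^ p ∂μ) ^ (1 / p)

/-- The Hardy–Littlewood averaging operator `M_t^G f(x) = |G_t|⁻¹ ∫_{G_t} f(x-y) dy`,
where `G_t = t • G`. -/
def avg {d : ℕ} (G : Set (EuclideanSpace ℝ (Fin d))) (t : ℝ)
    (f : EuclideanSpace ℝ (Fin d) → ℝ) (x : EuclideanSpace ℝ (Fin d)) : ℝ :=
  ((volume (t • G)).toReal)⁻¹ * ∫ y in t • G, f (x - y)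

/-- A symmetric convex body: a bounded, open, convex, nonempty set symmetric about the origin. -/
def IsSymmetricConvexBody {d : ℕ} (G : Set (EuclideanSpace ℝ (Fin d))) : Prop :=
  Convex ℝ G ∧ IsOpen G ∧ Bornology.IsBounded G ∧ G.Nonempty ∧ ∀ x ∈ G, -x ∈ G

/-
Rescale to `[0, 1)`. Given `t_0 < ⋯ < t_J`, move each `t_i` to its left neighbour on the grid
`2^{-L} ℕ`; by continuity the error vanishes as `L → ∞`, and the grid points bound a family of
disjoint grid intervals `[p_j, q_j)`. Induction on `L`: shrinking each interval to the coarser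
interval `[⌈p_j/2⌉, ⌊q_j/2⌋)` discards at most one finest cell at each end, and distinct intervals
discard distinct cells, so by Minkowski the finest level costs at most
`(∑ left cells)^{1/r} + (∑ right cells)^{1/r} ≤ 2^{1-1/r} (∑_k |Δ_{L,k}|^r)^{1/r}`.
-/

open Filter Topology Finset

lemma ENNReal.rpow_one_div_add_rpow_one_div_le {r : ℝ} (hr : 1 ≤ r) (x y : ℝ≥0∞) :
    x ^ (1 / r) + y ^ (1 / r) ≤ ENNReal.ofReal ((2 : ℝ) ^ (1 - 1 / r)) * (x + y) ^ (1 / r) := by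
  have hr0 : 0 < r := zero_lt_one.trans_le hr
  have hpow : ∀ z : ℝ≥0∞, (z ^ (1 / r)) ^ r = z := fun z => by
    rw [← ENNReal.rpow_mul, one_div_mul_cancel hr0.ne', ENNReal.rpow_one]
  calc x ^ (1 / r) + y ^ (1 / r) = ((x ^ (1 / r) + y ^ (1 / r)) ^ r) ^ (1 / r) := by
        rw [← ENNReal.rpow_mul, mul_one_div_cancel hr0.ne', ENNReal.rpow_one]
    _ ≤ ((2 : ℝ≥0∞) ^ (r - 1) * (x + y)) ^ (1 / r) := by
        gcongr
        simpa only [hpow] using ENNReal.rpow_add_le_mul_rpow_add_rpow (x ^ (1 / r)) (y ^ (1 / r)) hr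
    _ = ENNReal.ofReal ((2 : ℝ) ^ (1 - 1 / r)) * (x + y) ^ (1 / r) := by
        rw [ENNReal.mul_rpow_of_nonneg _ _ (by positivity), ← ENNReal.rpow_mul,
          ← ENNReal.ofReal_rpow_of_pos two_pos, ENNReal.ofReal_ofNat]
        congr 2
        field_simp

lemma one_le_ofReal_two_rpow {r : ℝ} (hr : 1 ≤ r) : 1 ≤ ENNReal.ofReal ((2 : ℝ) ^ (1 - 1 / r)) :=
  ENNReal.one_le_ofReal.2 <| Real.one_le_rpow one_le_two <| sub_nonneg.2 <|
    (div_le_one (zero_lt_one.trans_le hr)).2 hr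

lemma Finset.sum_comp_le_sum_of_injOn {ι κ M : Type*} [AddCommMonoid M] [PartialOrder M]
    [CanonicallyOrderedAdd M] {s : Finset ι} {t : Finset κ} {e : ι → κ}
    (he : Set.InjOn e s) (hst : Set.MapsTo e s t) (g : κ → M) :
    ∑ j ∈ s, g (e j) ≤ ∑ m ∈ t, g m := by
  classical
  rw [← sum_image he]
  exact sum_le_sum_of_subset fun m hm => by
    obtain ⟨j, hj, rfl⟩ := mem_image.1 hm
    exact hst hj

lemma nnnorm_sub_le_nnnorm_sub_add_nnnorm_sub_add_nnnorm_sub {E : Type*} [SeminormedAddCommGroup E]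
    (x y x' y' : E) :
    ‖y - x‖₊ ≤ ‖y' - x'‖₊ + (‖y - y'‖₊ + ‖x - x'‖₊) :=
  calc ‖y - x‖₊ = ‖(y' - x') + ((y - y') - (x - x'))‖₊ := by congr 1; abel
    _ ≤ _ := (nnnorm_add_le _ _).trans (add_le_add_right (nnnorm_sub_le _ _) _)

lemma ENNReal.tendsto_Lp_sum_zero {α ι : Type*} {l : Filter α} {r : ℝ} (hr : 0 < r)
    (s : Finset ι) {f : α → ι → ℝ≥0∞} (hf : ∀ i ∈ s, Tendsto (f · i) l (𝓝 0)) :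
    Tendsto (fun x => (∑ i ∈ s, f x i ^ r) ^ (1 / r)) l (𝓝 0) := by
  have hsum : Tendsto (fun x => ∑ i ∈ s, f x i ^ r) l (𝓝 0) := by
    simpa [ENNReal.zero_rpow_of_pos hr] using tendsto_finsetSum s fun i hi =>
      ((ENNReal.continuous_rpow_const (y := r)).tendsto 0).comp (hf i hi)
  simpa [Function.comp_def, hr] using
    ((ENNReal.continuous_rpow_const (y := 1 / r)).tendsto 0).comp hsum

section DyadicGrid

variable {E : Type*} [SeminormedAddCommGroup E] {r : ℝ}

def dyadicScaleVariation (r : ℝ) (a : ℝ → E) (l : ℕ) : ℝ≥0∞ :=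
  (∑ k ∈ range (2 ^ l), (‖a ((k + 1 : ℕ) / 2 ^ l) - a (k / 2 ^ l)‖₊ : ℝ≥0∞) ^ r) ^ (1 / r)

lemma Nat.cast_two_mul_div_two_pow_succ (k L : ℕ) :
    ((2 * k : ℕ) : ℝ) / 2 ^ (L + 1) = k / 2 ^ L := by
  push_cast
  rw [pow_succ]
  field_simp

lemma nnnorm_sub_rpow_add_nnnorm_sub_rpow_of_eq_or_eq (hr : 0 < r) {x y z : E}
    (hz : z = x ∨ z = y) :
    (‖x - z‖₊ : ℝ≥0∞) ^ r + (‖y - z‖₊ : ℝ≥0∞) ^ r = (‖y - x‖₊ : ℝ≥0∞) ^ r := by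
  rcases hz with rfl | rfl
  · simp [ENNReal.zero_rpow_of_pos hr]
  · rw [← nnnorm_neg, neg_sub]
    simp [ENNReal.zero_rpow_of_pos hr]

lemma coarse_point_eq_or_eq (L m : ℕ) :
    (((m + 1) / 2 : ℕ) : ℝ) / 2 ^ L = m / 2 ^ (L + 1) ∨
      (((m + 1) / 2 : ℕ) : ℝ) / 2 ^ L = (m + 1 : ℕ) / 2 ^ (L + 1) := by
  obtain ⟨k, rfl | rfl⟩ := Nat.even_or_odd' m
  · left
    rw [show (2 * k + 1) / 2 = k by omega, Nat.cast_two_mul_div_two_pow_succ]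
  · right
    rw [show (2 * k + 1 + 1) / 2 = k + 1 by omega, show 2 * k + 1 + 1 = 2 * (k + 1) by ring,
      Nat.cast_two_mul_div_two_pow_succ]

variable {ι : Type*} {s : Finset ι} {p q : ι → ℕ}

lemma le_or_le_of_pairwiseDisjoint_Ico (hpq : ∀ j ∈ s, p j < q j)
    (hdisj : (s : Set ι).PairwiseDisjoint fun j => Set.Ico (p j) (q j))
    {i j : ι} (hi : i ∈ s) (hj : j ∈ s) (hij : i ≠ j) : q i ≤ p j ∨ q j ≤ p i := by
  have := Set.Ico_disjoint_Ico.1 (hdisj hi hj hij)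
  have := hpq i hi
  have := hpq j hj
  omega

lemma injOn_left_of_pairwiseDisjoint_Ico (hpq : ∀ j ∈ s, p j < q j)
    (hdisj : (s : Set ι).PairwiseDisjoint fun j => Set.Ico (p j) (q j)) : Set.InjOn p s := by
  intro i hi j hj hij
  by_contra hne
  have := le_or_le_of_pairwiseDisjoint_Ico hpq hdisj hi hj hne
  have := hpq i hi
  have := hpq j hj
  omega

lemma injOn_right_of_pairwiseDisjoint_Ico (hpq : ∀ j ∈ s, p j < q j)
    (hdisj : (s : Set ι).PairwiseDisjoint fun j => Set.Ico (p j) (q j)) : Set.InjOn q s := by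
  intro i hi j hj hij
  by_contra hne
  have := le_or_le_of_pairwiseDisjoint_Ico hpq hdisj hi hj hne
  have := hpq i hi
  have := hpq j hj
  omega

lemma Lp_sum_coarsening_errors_le (hr : 1 ≤ r) (a : ℝ → E) (L : ℕ)
    (hpq : ∀ j ∈ s, p j < q j) (hq : ∀ j ∈ s, q j ≤ 2 ^ (L + 1))
    (hdisj : (s : Set ι).PairwiseDisjoint fun j => Set.Ico (p j) (q j)) :
    (∑ j ∈ s, ((‖a (q j / 2 ^ (L + 1)) - a ((q j / 2 : ℕ) / 2 ^ L)‖₊ : ℝ≥0∞)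
        + ‖a (p j / 2 ^ (L + 1)) - a (((p j + 1) / 2 : ℕ) / 2 ^ L)‖₊) ^ r) ^ (1 / r) ≤
      ENNReal.ofReal ((2 : ℝ) ^ (1 - 1 / r)) * dyadicScaleVariation r a (L + 1) := by
  have hr0 : 0 < r := zero_lt_one.trans_le hr
  set right : ℕ → ℝ≥0∞ := fun m =>
    (‖a ((m + 1 : ℕ) / 2 ^ (L + 1)) - a (((m + 1) / 2 : ℕ) / 2 ^ L)‖₊ : ℝ≥0∞) ^ r
  set left : ℕ → ℝ≥0∞ := fun m =>
    (‖a (m / 2 ^ (L + 1)) - a (((m + 1) / 2 : ℕ) / 2 ^ L)‖₊ : ℝ≥0∞) ^ r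
  have hright : ∑ j ∈ s, (‖a (q j / 2 ^ (L + 1)) - a ((q j / 2 : ℕ) / 2 ^ L)‖₊ : ℝ≥0∞) ^ r ≤
      ∑ m ∈ range (2 ^ (L + 1)), right m := by
    calc _ = ∑ j ∈ s, right (q j - 1) := sum_congr rfl fun j hj => by
            simp only [right, Nat.sub_add_cancel ((Nat.zero_le _).trans_lt (hpq j hj))]
      _ ≤ _ := by
        refine sum_comp_le_sum_of_injOn (fun i hi j hj hij => ?_) (fun j hj => ?_) right
        · have := hpq i hi
          have := hpq j hj
          exact injOn_right_of_pairwiseDisjoint_Ico hpq hdisj hi hj (by omega)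
        · simpa using (Nat.sub_lt ((Nat.zero_le _).trans_lt (hpq j hj)) one_pos).trans_le (hq j hj)
  have hleft : ∑ j ∈ s, left (p j) ≤ ∑ m ∈ range (2 ^ (L + 1)), left m :=
    sum_comp_le_sum_of_injOn (injOn_left_of_pairwiseDisjoint_Ico hpq hdisj)
      (fun j hj => by simpa using (hpq j hj).trans_le (hq j hj)) left
  -- each cell `[m, m + 1]` of level `L + 1` is discarded on the left or on the right, not both
  have hsum : ∑ m ∈ range (2 ^ (L + 1)), right m + ∑ m ∈ range (2 ^ (L + 1)), left m =
      dyadicScaleVariation r a (L + 1) ^ r := by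
    rw [dyadicScaleVariation, ← ENNReal.rpow_mul, one_div_mul_cancel hr0.ne', ENNReal.rpow_one,
      ← sum_add_distrib]
    refine sum_congr rfl fun m _ => ?_
    rw [add_comm]
    exact nnnorm_sub_rpow_add_nnnorm_sub_rpow_of_eq_or_eq hr0
      ((coarse_point_eq_or_eq L m).imp (congrArg a) (congrArg a))
  calc _ ≤ (∑ j ∈ s, (‖a (q j / 2 ^ (L + 1)) - a ((q j / 2 : ℕ) / 2 ^ L)‖₊ : ℝ≥0∞) ^ r) ^ (1 / r)
        + (∑ j ∈ s, left (p j)) ^ (1 / r) := ENNReal.Lp_add_le _ _ _ hr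
    _ ≤ (∑ m ∈ range (2 ^ (L + 1)), right m) ^ (1 / r)
        + (∑ m ∈ range (2 ^ (L + 1)), left m) ^ (1 / r) := by gcongr
    _ ≤ _ := ENNReal.rpow_one_div_add_rpow_one_div_le hr _ _
    _ = _ := by
      rw [hsum, ← ENNReal.rpow_mul, mul_one_div_cancel hr0.ne', ENNReal.rpow_one]

lemma Lp_sum_increments_level_zero_le (hr : 0 ≤ r) (a : ℝ → E) (hpq : ∀ j ∈ s, p j < q j)
    (hq : ∀ j ∈ s, q j ≤ 2 ^ 0)
    (hdisj : (s : Set ι).PairwiseDisjoint fun j => Set.Ico (p j) (q j)) :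
    (∑ j ∈ s, (‖a (q j / 2 ^ 0) - a (p j / 2 ^ 0)‖₊ : ℝ≥0∞) ^ r) ^ (1 / r) ≤
      dyadicScaleVariation r a 0 := by
  set g : ℕ → ℝ≥0∞ := fun m => (‖a ((m + 1 : ℕ) / 2 ^ 0) - a (m / 2 ^ 0)‖₊ : ℝ≥0∞) ^ r
  have hunit : ∀ j ∈ s, q j = p j + 1 := fun j hj => by
    have := hpq j hj
    have := hq j hj
    omega
  calc _ = (∑ j ∈ s, g (p j)) ^ (1 / r) := by
        congr 1
        exact sum_congr rfl fun j hj => by simp only [g, hunit j hj]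
    _ ≤ _ := by
        refine ENNReal.rpow_le_rpow (sum_comp_le_sum_of_injOn
          (injOn_left_of_pairwiseDisjoint_Ico hpq hdisj) (fun j hj => ?_) g) (by positivity)
        simpa using (hpq j hj).trans_le (hq j hj)

theorem Lp_sum_dyadic_increments_le (hr : 1 ≤ r) (a : ℝ → E) (L : ℕ)
    (hpq : ∀ j ∈ s, p j < q j) (hq : ∀ j ∈ s, q j ≤ 2 ^ L)
    (hdisj : (s : Set ι).PairwiseDisjoint fun j => Set.Ico (p j) (q j)) :
    (∑ j ∈ s, (‖a (q j / 2 ^ L) - a (p j / 2 ^ L)‖₊ : ℝ≥0∞) ^ r) ^ (1 / r) ≤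
      ENNReal.ofReal ((2 : ℝ) ^ (1 - 1 / r)) * ∑ l ∈ range (L + 1), dyadicScaleVariation r a l := by
  induction L generalizing s p q with
  | zero =>
    rw [sum_range_one]
    exact (Lp_sum_increments_level_zero_le (zero_le_one.trans hr) a hpq hq hdisj).trans
      (le_mul_of_one_le_left' (one_le_ofReal_two_rpow hr))
  | succ L ih =>
    set s' := s.filter fun j => (p j + 1) / 2 < q j / 2
    have hcoarse := ih (s := s') (p := fun j => (p j + 1) / 2) (q := fun j => q j / 2)
      (fun j hj => (mem_filter.1 hj).2)
      (fun j hj => by have := hq j (mem_filter.1 hj).1; rw [pow_succ] at this; omega)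
      (fun i hi j hj hij => by
        have := le_or_le_of_pairwiseDisjoint_Ico hpq hdisj (mem_filter.1 hi).1
          (mem_filter.1 hj).1 hij
        simp only [Function.onFun, Set.Ico_disjoint_Ico]
        omega)
    have hmid :
        ∑ j ∈ s', (‖a ((q j / 2 : ℕ) / 2 ^ L) - a (((p j + 1) / 2 : ℕ) / 2 ^ L)‖₊ : ℝ≥0∞) ^ r
        = ∑ j ∈ s, (‖a ((q j / 2 : ℕ) / 2 ^ L) - a (((p j + 1) / 2 : ℕ) / 2 ^ L)‖₊ : ℝ≥0∞) ^ r := by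
      refine sum_filter_of_ne fun j hj hne => ?_
      by_contra hle
      have := hpq j hj
      rw [show (p j + 1) / 2 = q j / 2 by omega, sub_self, nnnorm_zero, ENNReal.coe_zero,
        ENNReal.zero_rpow_of_pos (zero_lt_one.trans_le hr)] at hne
      exact hne rfl
    have htriangle : ∀ j ∈ s, (‖a (q j / 2 ^ (L + 1)) - a (p j / 2 ^ (L + 1))‖₊ : ℝ≥0∞) ≤
        ‖a ((q j / 2 : ℕ) / 2 ^ L) - a (((p j + 1) / 2 : ℕ) / 2 ^ L)‖₊
          + ((‖a (q j / 2 ^ (L + 1)) - a ((q j / 2 : ℕ) / 2 ^ L)‖₊ : ℝ≥0∞)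
            + ‖a (p j / 2 ^ (L + 1)) - a (((p j + 1) / 2 : ℕ) / 2 ^ L)‖₊) := fun j _ => by
      exact_mod_cast nnnorm_sub_le_nnnorm_sub_add_nnnorm_sub_add_nnnorm_sub _ _ _ _
    calc _ ≤ _ := ENNReal.rpow_le_rpow (sum_le_sum fun j hj =>
            ENNReal.rpow_le_rpow (htriangle j hj) (zero_le_one.trans hr)) (by positivity)
      _ ≤ _ := ENNReal.Lp_add_le _ _ _ hr
      _ ≤ _ := add_le_add (hmid ▸ hcoarse) (Lp_sum_coarsening_errors_le hr a L hpq hq hdisj)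
      _ = _ := by rw [sum_range_succ _ (L + 1), mul_add]

end DyadicGrid

section UnitInterval

variable {E : Type*} [SeminormedAddCommGroup E] {r : ℝ}

lemma Lp_sum_monotone_dyadic_increments_le (hr : 1 ≤ r) (a : ℝ → E) (L : ℕ) {J : ℕ}
    {u : Fin (J + 1) → ℕ} (hu : Monotone u) (hle : ∀ i, u i ≤ 2 ^ L) :
    (∑ j : Fin J, (‖a (u j.succ / 2 ^ L) - a (u j.castSucc / 2 ^ L)‖₊ : ℝ≥0∞) ^ r) ^ (1 / r) ≤
      ENNReal.ofReal ((2 : ℝ) ^ (1 - 1 / r)) * ∑ l ∈ range (L + 1), dyadicScaleVariation r a l := by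
  have hstep : ∀ j : Fin J, u j.castSucc ≤ u j.succ := fun j => hu (Fin.castSucc_le_succ j)
  rw [← sum_filter_of_ne (p := fun j => u j.castSucc < u j.succ) fun j _ hne => ?_]
  · refine Lp_sum_dyadic_increments_le hr a L (fun j hj => (mem_filter.1 hj).2)
      (fun j _ => hle _) fun i _ j _ hij => ?_
    simp only [Function.onFun, Set.Ico_disjoint_Ico]
    have := hstep i
    have := hstep j
    rcases lt_or_gt_of_ne hij with h | h
    · have := hu (Fin.succ_le_castSucc_iff.2 h)
      omega
    · have := hu (Fin.succ_le_castSucc_iff.2 h)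
      omega
  · by_contra hlt
    rw [(hstep j).antisymm (not_lt.1 hlt), sub_self, nnnorm_zero, ENNReal.coe_zero,
      ENNReal.zero_rpow_of_pos (zero_lt_one.trans_le hr)] at hne
    exact hne rfl

lemma floor_mul_two_pow_div_mem_Icc {x : ℝ} (hx : 0 ≤ x) (L : ℕ) :
    (⌊x * 2 ^ L⌋₊ : ℝ) / 2 ^ L ∈ Icc 0 x :=
  ⟨by positivity, div_le_of_le_mul₀ (by positivity) hx (Nat.floor_le (by positivity))⟩

lemma tendsto_floor_mul_two_pow_div {x : ℝ} (hx : 0 ≤ x) :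
    Tendsto (fun L : ℕ => (⌊x * 2 ^ L⌋₊ : ℝ) / 2 ^ L) atTop (𝓝[Icc 0 x] x) :=
  tendsto_nhdsWithin_iff.2 ⟨(tendsto_nat_floor_mul_div_atTop hx).comp
    (tendsto_pow_atTop_atTop_of_one_lt one_lt_two), .of_forall (floor_mul_two_pow_div_mem_Icc hx)⟩

theorem Vr_Ico_zero_one_le (hr : 1 ≤ r) (a : ℝ → E) (ha : ContinuousOn a (Ico 0 1)) :
    Vr r a (Ico 0 1) ≤
      ENNReal.ofReal ((2 : ℝ) ^ (1 - 1 / r)) * ∑' l, dyadicScaleVariation r a l := by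
  refine iSup_le fun J => iSup_le fun t => iSup_le fun ht => iSup_le fun htZ => ?_
  set u : ℕ → Fin (J + 1) → ℕ := fun L i => ⌊t i * 2 ^ L⌋₊
  set err : ℕ → Fin (J + 1) → ℝ≥0∞ := fun L i => ‖a (t i) - a (u L i / 2 ^ L)‖₊
  have herr : ∀ i, Tendsto (err · i) atTop (𝓝 0) := fun i => by
    have hlim := (ha (t i) (htZ i)).tendsto.comp <| tendsto_nhdsWithin_mono_right
      (Icc_subset_Ico_right (htZ i).2) (tendsto_floor_mul_two_pow_div (htZ i).1)
    simpa [err, u] using ENNReal.tendsto_coe.2 ((tendsto_const_nhds (x := a (t i))).sub hlim).nnnorm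
  have hbound : ∀ L, (∑ j : Fin J, (‖a (t j.succ) - a (t j.castSucc)‖₊ : ℝ≥0∞) ^ r) ^ (1 / r) ≤
      ENNReal.ofReal ((2 : ℝ) ^ (1 - 1 / r)) * ∑' l, dyadicScaleVariation r a l
        + (∑ j : Fin J, (err L j.succ + err L j.castSucc) ^ r) ^ (1 / r) := fun L => by
    have hu : Monotone (u L) := fun i j hij =>
      Nat.floor_mono (mul_le_mul_of_nonneg_right (ht.monotone hij) (by positivity))
    have hle : ∀ i, u L i ≤ 2 ^ L := fun i => Nat.floor_le_of_le <| by
      push_cast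
      exact mul_le_of_le_one_left (by positivity) (htZ i).2.le
    calc _ ≤ (∑ j : Fin J, ((‖a (u L j.succ / 2 ^ L) - a (u L j.castSucc / 2 ^ L)‖₊ : ℝ≥0∞)
          + (err L j.succ + err L j.castSucc)) ^ r) ^ (1 / r) := by
          gcongr with j
          rw [← ENNReal.coe_add, ← ENNReal.coe_add, ENNReal.coe_le_coe]
          exact nnnorm_sub_le_nnnorm_sub_add_nnnorm_sub_add_nnnorm_sub _ _ _ _
      _ ≤ _ := ENNReal.Lp_add_le _ _ _ hr
      _ ≤ _ := by
          gcongr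
          exact (Lp_sum_monotone_dyadic_increments_le hr a L hu hle).trans
            (by gcongr; exact ENNReal.sum_le_tsum _)
  have htail : Tendsto (fun L => (∑ j : Fin J, (err L j.succ + err L j.castSucc) ^ r) ^ (1 / r))
      atTop (𝓝 0) :=
    ENNReal.tendsto_Lp_sum_zero (zero_lt_one.trans_le hr) _ fun j _ => by
      simpa using (herr j.succ).add (herr j.castSucc)
  exact ge_of_tendsto' (by simpa using tendsto_const_nhds.add htail) hbound

end UnitInterval

lemma Vr_le_Vr_comp {E : Type*} [SeminormedAddGroup E] (r : ℝ) (a : ℝ → E) {φ : ℝ → ℝ}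
    (hφ : StrictMono φ) {Z Z' : Set ℝ} (hZ : Z ⊆ φ '' Z') : Vr r a Z ≤ Vr r (a ∘ φ) Z' := by
  refine iSup_le fun J => iSup_le fun t => iSup_le fun ht => iSup_le fun htZ => ?_
  choose t' ht'Z ht' using fun j => hZ (htZ j)
  have hmono : StrictMono t' := fun i j hij => hφ.lt_iff_lt.1 (by simpa only [ht'] using ht hij)
  refine le_iSup_of_le J <| le_iSup_of_le t' <| le_iSup_of_le hmono <| le_iSup_of_le ht'Z ?_
  simp [ht']

theorem Vr_Ico_le {E : Type*} [SeminormedAddCommGroup E] {r : ℝ} (hr : 1 ≤ r) (a : ℝ → E)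
    {x₀ δ : ℝ} (hδ : 0 < δ) (ha : ContinuousOn a (Ico x₀ (x₀ + δ))) :
    Vr r a (Ico x₀ (x₀ + δ)) ≤ ENNReal.ofReal ((2 : ℝ) ^ (1 - 1 / r)) *
      ∑' l, dyadicScaleVariation r (fun s => a (x₀ + δ * s)) l := by
  have hφ : StrictMono fun s => x₀ + δ * s := fun _ _ h =>
    add_lt_add_right (mul_lt_mul_of_pos_left h hδ) x₀
  have hZ : Ico x₀ (x₀ + δ) ⊆ (fun s => x₀ + δ * s) '' Ico 0 1 := fun x hx =>
    ⟨(x - x₀) / δ, ⟨div_nonneg (by linarith [hx.1]) hδ.le, (div_lt_one hδ).2 (by linarith [hx.2])⟩,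
      by field_simp; ring⟩
  refine (Vr_le_Vr_comp r a hφ hZ).trans (Vr_Ico_zero_one_le hr _ (ha.comp (by fun_prop) ?_))
  intro s hs
  constructor <;> nlinarith [hs.1, hs.2]

/-- Domination of short `r`-variations over `[2^n, 2^{n+1})` by sums over dyadic
subdivision scales (Lemma 2.1). -/
theorem short_variation_dyadic_domination (r : ℝ) (hr : 1 ≤ r) (n : ℤ)
    (a : ℝ → ℂ) (ha : ContinuousOn a (Set.Icc ((2:ℝ) ^ n) ((2:ℝ) ^ (n + 1)))) :
    Vr r a (Set.Ico ((2:ℝ) ^ n) ((2:ℝ) ^ (n + 1)))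
      ≤ ENNReal.ofReal ((2:ℝ) ^ (1 - 1 / r)) *
        ∑' l : ℕ, (∑ k ∈ Finset.range (2 ^ l),
          ((‖a ((2:ℝ) ^ n + (2:ℝ) ^ (n - (l:ℤ)) * ((k:ℝ) + 1)) -
              a ((2:ℝ) ^ n + (2:ℝ) ^ (n - (l:ℤ)) * (k:ℝ))‖₊ : ℝ≥0∞)) ^ r) ^ (1 / r) := by
  have hdouble : (2 : ℝ) ^ (n + 1) = 2 ^ n + 2 ^ n := by rw [zpow_add_one₀ two_ne_zero]; ring
  have hgrid : ∀ (l : ℕ) (x : ℝ), (2 : ℝ) ^ n * (x / 2 ^ l) = 2 ^ (n - (l : ℤ)) * x := fun l x => by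
    rw [zpow_sub₀ two_ne_zero, zpow_natCast]
    ring
  rw [hdouble] at ha ⊢
  refine (Vr_Ico_le hr a (zpow_pos two_pos n) (ha.mono Ico_subset_Icc_self)).trans_eq ?_
  simp only [dyadicScaleVariation, hgrid]
  push_cast
  rfl
end
end

section
/- Let 𝔞 : (0, ∞) → [0, ∞) be a differentiable function. Then with an absolute implied constant: (i) for real numbers u < v and every r ∈ [2, ∞), V_r(𝔞_t : t ∈ [u, v)) ≲ ( ∫_u^v |𝔞_t|^2 dt/t )^{1/4} · ( ∫_u^v |t 𝔞'_t|^2 dt/t )^{1/4}; (ii) for every l ∈ ℤ and r ∈ [2, ∞), V_r(𝔞_t : t ∈ [2^l, 2^{l+1})) ≲ ( ∫_{2^l}^{2^{l+1}} |t 𝔞'_t|^2 dt/t )^{1/2}; consequently (iii) ( Σ_{n∈ℤ} V_2(𝔞_t : t ∈ [2^n, 2^{n+1}))^2 )^{1/2} ≲ ( ∫_0^∞ |t 𝔞'_t|^2 dt/t )^{1/2}. -/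
open MeasureTheory ENNReal Set
open scoped Pointwise NNReal

noncomputable section

/-!
If `‖a t - a s‖ ^ p ≤ ∫_s^t g` for all `s < t` in `Z ⊆ [u, v]`, then, the intervals
`(t_j, t_{j+1})` of a chain being disjoint, `V_p(a, Z) ≤ (∫_u^v g) ^ (1/p)`; and `V_r ≤ V_p`
for `r ≥ p`. For (ii) take `p = 1`, `g = |𝔞'|` and apply Cauchy–Schwarz against `dt/t`, which has
mass at most `1` on a dyadic block. For (i) take `p = 2` and `g = 2 |𝔞 𝔞'|`: this is possible
because `|𝔞_t - 𝔞_s|² ≤ |𝔞_t² - 𝔞_s²|` for nonnegative `𝔞`; Cauchy–Schwarz then splits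
`∫ |𝔞| |t 𝔞'| dt/t`. Part (iii) sums the squares of (ii) for `r = 2` over the disjoint dyadic
blocks.
-/

namespace VariationSquareFunction

theorem sum_rpow_le_rpow_sum {ι : Type*} (s : Finset ι) (x : ι → ℝ≥0∞) {p : ℝ} (hp : 1 ≤ p) :
    ∑ i ∈ s, x i ^ p ≤ (∑ i ∈ s, x i) ^ p := by
  induction s using Finset.cons_induction with
  | empty => simp [ENNReal.zero_rpow_of_pos (zero_lt_one.trans_le hp)]
  | cons i s _ ih =>
    rw [Finset.sum_cons, Finset.sum_cons]
    exact (add_le_add le_rfl ih).trans (ENNReal.add_rpow_le_rpow_add _ _ hp)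

theorem rpow_sum_rpow_le_of_le {ι : Type*} (s : Finset ι) (x : ι → ℝ≥0∞) {p r : ℝ}
    (hp : 0 < p) (hpr : p ≤ r) :
    (∑ i ∈ s, x i ^ r) ^ (1 / r) ≤ (∑ i ∈ s, x i ^ p) ^ (1 / p) := by
  have hr : 0 < r := hp.trans_le hpr
  have h := sum_rpow_le_rpow_sum s (fun i => x i ^ p) ((one_le_div hp).2 hpr)
  simp only [← ENNReal.rpow_mul, mul_div_cancel₀ _ hp.ne'] at h
  calc (∑ i ∈ s, x i ^ r) ^ (1 / r)
      ≤ ((∑ i ∈ s, x i ^ p) ^ (r / p)) ^ (1 / r) := by gcongr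
    _ = (∑ i ∈ s, x i ^ p) ^ (1 / p) := by
      rw [← ENNReal.rpow_mul]; congr 1; field_simp

theorem Vr_le_Vr_of_le {E : Type*} [SeminormedAddGroup E] (a : ℝ → E) (Z : Set ℝ) {p r : ℝ}
    (hp : 0 < p) (hpr : p ≤ r) : Vr r a Z ≤ Vr p a Z := by
  unfold Vr
  gcongr
  exact rpow_sum_rpow_le_of_le _ _ hp hpr

theorem sum_setLIntegral_Ioo_le {J : ℕ} {t : Fin (J + 1) → ℝ} (ht : Monotone t) (g : ℝ → ℝ≥0∞) :
    ∑ j : Fin J, ∫⁻ x in Ioo (t j.castSucc) (t j.succ), g x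
      ≤ ∫⁻ x in Ioo (t 0) (t (Fin.last J)), g x := by
  have hdisj : Pairwise (Function.onFun Disjoint fun j : Fin J => Ioo (t j.castSucc) (t j.succ)) :=
    (pairwise_disjoint_on _).2 fun i j hij =>
      (Ioc_disjoint_Ioc_of_le (ht (Fin.succ_le_castSucc_iff.2 hij))).mono
        Ioo_subset_Ioc_self Ioo_subset_Ioc_self
  rw [← tsum_fintype (L := .unconditional _), ← lintegral_iUnion (fun _ => measurableSet_Ioo) hdisj]
  exact lintegral_mono_set <| iUnion_subset fun j =>
    Ioo_subset_Ioo (ht (Fin.zero_le _)) (ht (Fin.le_last _))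

theorem Vr_le_of_rpow_enorm_sub_le {E : Type*} [SeminormedAddGroup E] {a : ℝ → E} {Z : Set ℝ}
    {u v p : ℝ} {g : ℝ → ℝ≥0∞} (hp : 0 < p) (hZ : Z ⊆ Icc u v)
    (h : ∀ s ∈ Z, ∀ t ∈ Z, s < t → ‖a t - a s‖ₑ ^ p ≤ ∫⁻ x in Ioo s t, g x) :
    Vr p a Z ≤ (∫⁻ x in Ioo u v, g x) ^ (1 / p) := by
  refine iSup_le fun J => iSup_le fun t => iSup_le fun ht => iSup_le fun htZ => ?_
  gcongr
  calc ∑ j : Fin J, (‖a (t j.succ) - a (t j.castSucc)‖₊ : ℝ≥0∞) ^ p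
      ≤ ∑ j : Fin J, ∫⁻ x in Ioo (t j.castSucc) (t j.succ), g x :=
        Finset.sum_le_sum fun j _ => h _ (htZ _) _ (htZ _) (ht Fin.castSucc_lt_succ)
    _ ≤ ∫⁻ x in Ioo (t 0) (t (Fin.last J)), g x := sum_setLIntegral_Ioo_le ht.monotone g
    _ ≤ ∫⁻ x in Ioo u v, g x :=
        lintegral_mono_set (Ioo_subset_Ioo (hZ (htZ 0)).1 (hZ (htZ _)).2)

theorem enorm_sub_le_setLIntegral_enorm_deriv {E : Type*} [NormedAddCommGroup E]
    [NormedSpace ℝ E] [CompleteSpace E] {f : ℝ → E} {s t : ℝ} (hst : s ≤ t)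
    (hf : ∀ x ∈ Icc s t, DifferentiableAt ℝ f x) :
    ‖f t - f s‖ₑ ≤ ∫⁻ x in Ioo s t, ‖deriv f x‖ₑ := by
  rcases eq_top_or_lt_top (∫⁻ x in Ioo s t, ‖deriv f x‖ₑ) with hfin | hfin
  · exact hfin ▸ le_top
  have hint : IntervalIntegrable (deriv f) volume s t :=
    (intervalIntegrable_iff_integrableOn_Ioo_of_le hst).2
      ⟨aestronglyMeasurable_deriv f _, hfin⟩
  rw [← intervalIntegral.integral_deriv_eq_sub (fun x hx => hf x (uIcc_of_le hst ▸ hx)) hint,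
    intervalIntegral.integral_of_le hst, ← restrict_Ioo_eq_restrict_Ioc]
  exact enorm_integral_le_lintegral_enorm _

theorem sq_sub_le_abs_sq_sub {x y : ℝ} (hx : 0 ≤ x) (hy : 0 ≤ y) :
    (x - y) ^ 2 ≤ |x ^ 2 - y ^ 2| := by
  rw [← sq_abs, sq, show x ^ 2 - y ^ 2 = (x - y) * (x + y) by ring, abs_mul,
    abs_of_nonneg (add_nonneg hx hy)]
  exact mul_le_mul_of_nonneg_left (abs_sub_le_iff.2 ⟨by linarith, by linarith⟩) (abs_nonneg _)

theorem enorm_sub_rpow_two_le {a : ℝ → ℝ} {s t : ℝ} (hst : s ≤ t)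
    (ha0 : ∀ x ∈ Icc s t, 0 ≤ a x) (ha : ∀ x ∈ Icc s t, DifferentiableAt ℝ a x) :
    ‖a t - a s‖ₑ ^ (2 : ℝ) ≤ ∫⁻ x in Ioo s t, 2 * ‖a x * deriv a x‖ₑ := by
  calc ‖a t - a s‖ₑ ^ (2 : ℝ) ≤ ‖a t ^ 2 - a s ^ 2‖ₑ := by
        rw [ENNReal.rpow_two, ← enorm_pow, Real.enorm_eq_ofReal_abs, Real.enorm_eq_ofReal_abs,
          abs_of_nonneg (sq_nonneg _)]
        exact ENNReal.ofReal_le_ofReal (sq_sub_le_abs_sq_sub (ha0 t ⟨hst, le_rfl⟩)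
          (ha0 s ⟨le_rfl, hst⟩))
    _ ≤ ∫⁻ x in Ioo s t, ‖deriv (fun y => a y ^ 2) x‖ₑ :=
        enorm_sub_le_setLIntegral_enorm_deriv hst fun x hx => (ha x hx).pow 2
    _ = ∫⁻ x in Ioo s t, 2 * ‖a x * deriv a x‖ₑ := by
        refine setLIntegral_congr_fun measurableSet_Ioo fun x hx => ?_
        rw [deriv_fun_pow (ha x (Ioo_subset_Icc_self hx)) 2,
          show ((2 : ℕ) : ℝ) * a x ^ (2 - 1) * deriv a x = 2 * (a x * deriv a x) by ring,
          enorm_mul, Real.enorm_of_nonneg zero_le_two, ENNReal.ofReal_ofNat]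

theorem setLIntegral_enorm_mul_le {f g : ℝ → ℝ} {S : Set ℝ} (hS : MeasurableSet S)
    (hS0 : S ⊆ Ioi 0) (hf : AEMeasurable f (volume.restrict S))
    (hg : AEMeasurable g (volume.restrict S)) :
    ∫⁻ x in S, ‖f x * g x‖ₑ
      ≤ (∫⁻ x in S, ‖f x‖ₑ ^ (2 : ℝ) * ENNReal.ofReal (1 / x)) ^ ((1 : ℝ) / 2) *
        (∫⁻ x in S, ‖x * g x‖ₑ ^ (2 : ℝ) * ENNReal.ofReal (1 / x)) ^ ((1 : ℝ) / 2) := by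
  set w : ℝ → ℝ≥0∞ := fun x => ENNReal.ofReal (1 / x) ^ ((1 : ℝ) / 2)
  have hw2 : ∀ x, w x ^ (2 : ℝ) = ENNReal.ofReal (1 / x) := fun x => by
    simp only [w, ← ENNReal.rpow_mul]; norm_num
  have hw : Measurable w := by fun_prop
  have hsplit : ∀ x ∈ S, ‖f x * g x‖ₑ = (‖f x‖ₑ * w x) * (‖x * g x‖ₑ * w x) := fun x hx => by
    have hx : 0 < x := hS0 hx
    calc ‖f x * g x‖ₑ = ‖f x‖ₑ * ‖g x‖ₑ * (‖x‖ₑ * w x ^ (2 : ℝ)) := by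
          rw [hw2, Real.enorm_of_nonneg hx.le, ← ENNReal.ofReal_mul hx.le,
            mul_one_div_cancel hx.ne', ENNReal.ofReal_one, mul_one, enorm_mul]
      _ = (‖f x‖ₑ * w x) * (‖x * g x‖ₑ * w x) := by
          rw [ENNReal.rpow_two, enorm_mul]; ring
  calc ∫⁻ x in S, ‖f x * g x‖ₑ
      = ∫⁻ x in S, ((fun x => ‖f x‖ₑ * w x) * fun x => ‖x * g x‖ₑ * w x) x :=
        setLIntegral_congr_fun hS hsplit
    _ ≤ _ := ENNReal.lintegral_mul_le_Lp_mul_Lq _ Real.HolderConjugate.two_two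
        (hf.enorm.mul hw.aemeasurable) ((aemeasurable_id.mul hg).enorm.mul hw.aemeasurable)
    _ = _ := by simp only [ENNReal.mul_rpow_of_nonneg _ _ zero_le_two, hw2]

theorem setLIntegral_Ioo_inv_le {u v : ℝ} (hu : 0 < u) :
    ∫⁻ x in Ioo u v, ENNReal.ofReal (1 / x) ≤ ENNReal.ofReal ((v - u) / u) := by
  calc ∫⁻ x in Ioo u v, ENNReal.ofReal (1 / x) ≤ ∫⁻ _ in Ioo u v, ENNReal.ofReal (1 / u) :=
        setLIntegral_mono measurable_const fun x hx =>
          ENNReal.ofReal_le_ofReal (one_div_le_one_div_of_le hu hx.1.le)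
    _ = ENNReal.ofReal ((v - u) / u) := by
        rw [setLIntegral_const, Real.volume_Ioo, ← ENNReal.ofReal_mul (by positivity)]
        ring_nf

section

variable {a : ℝ → ℝ}

theorem Vr_Ico_le_of_nonneg {u v r : ℝ} (hu : 0 < u) (hr : 2 ≤ r)
    (ha0 : ∀ x ∈ Ico u v, 0 ≤ a x) (ha : ∀ x ∈ Ico u v, DifferentiableAt ℝ a x) :
    Vr r a (Ico u v)
      ≤ (2 : ℝ≥0∞) ^ ((1 : ℝ) / 2) *
        ((∫⁻ x in Ioo u v, ‖a x‖ₑ ^ (2 : ℝ) * ENNReal.ofReal (1 / x)) ^ ((1 : ℝ) / 4) *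
         (∫⁻ x in Ioo u v, ‖x * deriv a x‖ₑ ^ (2 : ℝ) * ENNReal.ofReal (1 / x)) ^ ((1 : ℝ) / 4)) := by
  set A := ∫⁻ x in Ioo u v, ‖a x‖ₑ ^ (2 : ℝ) * ENNReal.ofReal (1 / x)
  set B := ∫⁻ x in Ioo u v, ‖x * deriv a x‖ₑ ^ (2 : ℝ) * ENNReal.ofReal (1 / x)
  have hIcc : ∀ s ∈ Ico u v, ∀ t ∈ Ico u v, Icc s t ⊆ Ico u v := fun s hs t ht =>
    Icc_subset_Ico hs.1 ht.2
  have hcont : ContinuousOn a (Ioo u v) := fun x hx =>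
    (ha x (Ioo_subset_Ico_self hx)).continuousAt.continuousWithinAt
  have hCS : ∫⁻ x in Ioo u v, ‖a x * deriv a x‖ₑ ≤ A ^ ((1 : ℝ) / 2) * B ^ ((1 : ℝ) / 2) :=
    setLIntegral_enorm_mul_le measurableSet_Ioo (fun x hx => hu.trans hx.1)
      (hcont.aemeasurable measurableSet_Ioo) (aemeasurable_deriv a _)
  calc Vr r a (Ico u v) ≤ Vr 2 a (Ico u v) := Vr_le_Vr_of_le a _ two_pos hr
    _ ≤ (∫⁻ x in Ioo u v, 2 * ‖a x * deriv a x‖ₑ) ^ ((1 : ℝ) / 2) :=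
        Vr_le_of_rpow_enorm_sub_le two_pos Ico_subset_Icc_self fun s hs t ht hst =>
          enorm_sub_rpow_two_le hst.le (fun x hx => ha0 x (hIcc s hs t ht hx))
            (fun x hx => ha x (hIcc s hs t ht hx))
    _ ≤ (2 * (A ^ ((1 : ℝ) / 2) * B ^ ((1 : ℝ) / 2))) ^ ((1 : ℝ) / 2) := by
        rw [lintegral_const_mul' _ _ ofNat_ne_top]
        gcongr
    _ = (2 : ℝ≥0∞) ^ ((1 : ℝ) / 2) * (A ^ ((1 : ℝ) / 4) * B ^ ((1 : ℝ) / 4)) := by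
        simp only [ENNReal.mul_rpow_of_nonneg _ _ (by norm_num : (0 : ℝ) ≤ 1 / 2),
          ← ENNReal.rpow_mul]
        norm_num

theorem Vr_Ico_le_of_differentiable {u v r : ℝ} (hu : 0 < u) (hr : 1 ≤ r)
    (ha : ∀ x ∈ Ico u v, DifferentiableAt ℝ a x) :
    Vr r a (Ico u v)
      ≤ (∫⁻ x in Ioo u v, ‖x * deriv a x‖ₑ ^ (2 : ℝ) * ENNReal.ofReal (1 / x)) ^ ((1 : ℝ) / 2) *
        ENNReal.ofReal ((v - u) / u) ^ ((1 : ℝ) / 2) := by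
  calc Vr r a (Ico u v) ≤ Vr 1 a (Ico u v) := Vr_le_Vr_of_le a _ one_pos hr
    _ ≤ (∫⁻ x in Ioo u v, ‖deriv a x‖ₑ) ^ (1 / (1 : ℝ)) :=
        Vr_le_of_rpow_enorm_sub_le one_pos Ico_subset_Icc_self fun s hs t ht hst => by
          rw [ENNReal.rpow_one]
          exact enorm_sub_le_setLIntegral_enorm_deriv hst.le fun x hx =>
            ha x (Icc_subset_Ico hs.1 ht.2 hx)
    _ = ∫⁻ x in Ioo u v, ‖1 * deriv a x‖ₑ := by simp
    _ ≤ _ := by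
        refine (setLIntegral_enorm_mul_le measurableSet_Ioo (fun x hx => hu.trans hx.1)
          aemeasurable_const (aemeasurable_deriv a _)).trans ?_
        rw [mul_comm]
        simp only [enorm_one, ENNReal.one_rpow, one_mul]
        gcongr
        exact setLIntegral_Ioo_inv_le hu

theorem Vr_dyadic_le {l : ℤ} {r : ℝ} (hr : 1 ≤ r)
    (ha : ∀ x ∈ Ico ((2 : ℝ) ^ l) (2 ^ (l + 1)), DifferentiableAt ℝ a x) :
    Vr r a (Ico ((2 : ℝ) ^ l) (2 ^ (l + 1)))
      ≤ (∫⁻ x in Ioo ((2 : ℝ) ^ l) (2 ^ (l + 1)),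
          ‖x * deriv a x‖ₑ ^ (2 : ℝ) * ENNReal.ofReal (1 / x)) ^ ((1 : ℝ) / 2) := by
  have hl : (0 : ℝ) < 2 ^ l := by positivity
  have hratio : ((2 : ℝ) ^ (l + 1) - 2 ^ l) / 2 ^ l = 1 := by
    rw [zpow_add_one₀ two_ne_zero]; field_simp; ring
  simpa [hratio] using Vr_Ico_le_of_differentiable hl hr ha

theorem tsum_Vr_two_dyadic_le (ha : ∀ x, 0 < x → DifferentiableAt ℝ a x) :
    (∑' n : ℤ, Vr 2 a (Ico ((2 : ℝ) ^ n) (2 ^ (n + 1))) ^ (2 : ℝ)) ^ ((1 : ℝ) / 2)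
      ≤ (∫⁻ x in Ioi 0, ‖x * deriv a x‖ₑ ^ (2 : ℝ) * ENNReal.ofReal (1 / x)) ^ ((1 : ℝ) / 2) := by
  set g : ℝ → ℝ≥0∞ := fun x => ‖x * deriv a x‖ₑ ^ (2 : ℝ) * ENNReal.ofReal (1 / x)
  have hdisj : Pairwise (Function.onFun Disjoint fun n : ℤ => Ioo ((2 : ℝ) ^ n) (2 ^ (n + 1))) := by
    simpa only [Order.succ_eq_add_one] using
      (zpow_right_mono₀ (one_le_two : (1 : ℝ) ≤ 2)).pairwise_disjoint_on_Ioo_succ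
  gcongr
  calc ∑' n : ℤ, Vr 2 a (Ico ((2 : ℝ) ^ n) (2 ^ (n + 1))) ^ (2 : ℝ)
      ≤ ∑' n : ℤ, ∫⁻ x in Ioo ((2 : ℝ) ^ n) (2 ^ (n + 1)), g x := by
        refine ENNReal.tsum_le_tsum fun n => ?_
        calc Vr 2 a (Ico ((2 : ℝ) ^ n) (2 ^ (n + 1))) ^ (2 : ℝ)
            ≤ ((∫⁻ x in Ioo ((2 : ℝ) ^ n) (2 ^ (n + 1)), g x) ^ ((1 : ℝ) / 2)) ^ (2 : ℝ) := by
              gcongr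
              exact Vr_dyadic_le one_le_two fun x hx => ha x ((zpow_pos two_pos n).trans_le hx.1)
          _ = ∫⁻ x in Ioo ((2 : ℝ) ^ n) (2 ^ (n + 1)), g x := by
              rw [← ENNReal.rpow_mul]; norm_num
    _ = ∫⁻ x in ⋃ n : ℤ, Ioo ((2 : ℝ) ^ n) (2 ^ (n + 1)), g x :=
        (lintegral_iUnion (fun _ => measurableSet_Ioo) hdisj g).symm
    _ ≤ ∫⁻ x in Ioi 0, g x :=
        lintegral_mono_set <| iUnion_subset fun n x hx => (zpow_pos two_pos n).trans hx.1

end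

end VariationSquareFunction

open VariationSquareFunction

/-- Variation bounds via square functions (Lemma A.2): for a nonnegative differentiable
`𝔞` on `(0,∞)`, with an absolute constant: (i) a product bound for `V_r` on `[u,v)`,
(ii) a bound for `V_r` on dyadic blocks, and (iii) the resulting `ℓ^2` bound over all
dyadic blocks by the square function `(∫_0^∞ |t 𝔞'(t)|^2 dt/t)^{1/2}`. -/
theorem variation_square_function_bounds :
    ∃ C : ℝ, 0 < C ∧ ∀ a : ℝ → ℝ,
      (∀ t : ℝ, 0 < t → 0 ≤ a t) → (∀ t : ℝ, 0 < t → DifferentiableAt ℝ a t) →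
      ((∀ u v r : ℝ, 0 < u → u < v → 2 ≤ r →
        Vr r a (Set.Ico u v)
          ≤ ENNReal.ofReal C *
            ((∫⁻ t in Set.Ioo u v,
                ((‖a t‖₊ : ℝ≥0∞)) ^ (2:ℝ) * ENNReal.ofReal (1 / t)) ^ ((1:ℝ)/4) *
             (∫⁻ t in Set.Ioo u v,
                ((‖t * deriv a t‖₊ : ℝ≥0∞)) ^ (2:ℝ) * ENNReal.ofReal (1 / t)) ^ ((1:ℝ)/4)))
      ∧ (∀ (l : ℤ) (r : ℝ), 2 ≤ r →
        Vr r a (Set.Ico ((2:ℝ) ^ l) ((2:ℝ) ^ (l + 1)))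
          ≤ ENNReal.ofReal C *
            (∫⁻ t in Set.Ioo ((2:ℝ) ^ l) ((2:ℝ) ^ (l + 1)),
              ((‖t * deriv a t‖₊ : ℝ≥0∞)) ^ (2:ℝ) * ENNReal.ofReal (1 / t)) ^ ((1:ℝ)/2))
      ∧ ((∑' n : ℤ, (Vr 2 a (Set.Ico ((2:ℝ) ^ n) ((2:ℝ) ^ (n + 1)))) ^ (2:ℝ)) ^ ((1:ℝ)/2)
          ≤ ENNReal.ofReal C *
            (∫⁻ t in Set.Ioi (0:ℝ),
              ((‖t * deriv a t‖₊ : ℝ≥0∞)) ^ (2:ℝ) * ENNReal.ofReal (1 / t)) ^ ((1:ℝ)/2))) := by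
  have hC : (1 : ℝ≥0∞) ≤ ENNReal.ofReal 2 := by norm_num
  refine ⟨2, two_pos, fun a ha0 ha => ⟨fun u v r hu _ hr => ?_, fun l r hr => ?_, ?_⟩⟩
  · have hsqrt : (2 : ℝ≥0∞) ^ ((1 : ℝ) / 2) ≤ ENNReal.ofReal 2 := by
      rw [ENNReal.ofReal_ofNat]
      simpa using ENNReal.rpow_le_rpow_of_exponent_le one_le_two (by norm_num : (1 : ℝ) / 2 ≤ 1)
    refine (Vr_Ico_le_of_nonneg hu hr (fun x hx => ha0 x (hu.trans_le hx.1))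
      (fun x hx => ha x (hu.trans_le hx.1))).trans (mul_le_mul_left hsqrt _)
  · refine (Vr_dyadic_le (one_le_two.trans hr) fun x hx => ha x ?_).trans
      (le_mul_of_one_le_left zero_le hC)
    exact (zpow_pos two_pos l).trans_le hx.1
  · exact (tsum_Vr_two_dyadic_le ha).trans (le_mul_of_one_le_left zero_le hC)

end
end
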